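/- Let (R, 𝔪) be a noetherian local ring all of whose associated prime ideals are minimal primes of R. Then Ass_R(\hat{R}/R) ⊆ Ass(R), where \hat{R} is the 𝔪-adic completion of R. In particular, if R is a noetherian local domain which is not complete (so R ⊊ \hat{R}), then Ass_R(\hat{R}/R) = {(0)}. -/

import Mathlib

/-!
Every nonzerodivisor `a` of `R` acts injectively on `R̂/R`. Indeed, if `a x = r ∈ R` with
`x ∈ R̂`, then `r ∈ aR̂ ∩ R = aR` because `R/aR` is `𝔪`-adically separated (Krull),
say `r = a s`; as `R̂` is flat over `R`, `a` is regular on `R̂`, so `x = s ∈ R`.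
Hence every associated prime `𝔭` of `R̂/R` consists of zero divisors of `R`, so by prime
avoidance it lies in an associated prime of `R`, which is minimal and therefore equal to `𝔭`.
In a domain the nonzerodivisors are the nonzero elements, which forces `𝔭 = 0`.
-/

open IsLocalRing
open scoped nonZeroDivisors

namespace AdicCompletion

variable {R : Type*} [CommRing R] (I : Ideal R)

theorem mem_span_singleton_of_of_eq_smul {a r : R} [IsHausdorff I (R ⧸ Ideal.span {a})]
    {x : AdicCompletion I R} (hx : of I R r = a • x) : r ∈ Ideal.span {a} := by
  rw [← Ideal.Quotient.eq_zero_iff_mem]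
  refine IsHausdorff.haus ‹_› _ fun n ↦ ?_
  obtain ⟨y, hy⟩ := Submodule.Quotient.mk_surjective _ (x.val n)
  have hr : r - a * y ∈ I ^ n • (⊤ : Submodule R R) := by
    rw [← Submodule.Quotient.eq, ← smul_eq_mul, Submodule.Quotient.mk_smul, hy]
    exact congr_arg (fun z ↦ z.val n) hx
  have hmk : Ideal.Quotient.mk (Ideal.span {a}) r = (r - a * y) • 1 := by
    rw [Algebra.smul_def, mul_one, Ideal.Quotient.algebraMap_eq, Ideal.Quotient.eq, sub_sub_cancel]
    exact Ideal.mul_mem_right y _ (Ideal.mem_span_singleton_self a)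
  rw [SModEq.sub_mem, sub_zero, hmk]
  exact Submodule.smul_mem_smul (by simpa using hr) Submodule.mem_top

variable [IsNoetherianRing R]

theorem isTorsionFree_quotient_range_of (hI : I ≤ Ideal.jacobson ⊥) :
    Module.IsTorsionFree R (AdicCompletion I R ⧸ LinearMap.range (of I R)) where
  isSMulRegular a ha := by
    have : IsHausdorff I (R ⧸ Ideal.span {a}) := .of_le_jacobson I _ hI
    refine isSMulRegular_iff_right_eq_zero_of_smul.mpr fun q hq ↦ ?_
    obtain ⟨x, rfl⟩ := Submodule.Quotient.mk_surjective _ q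
    rw [← Submodule.Quotient.mk_smul, Submodule.Quotient.mk_eq_zero] at hq
    rw [Submodule.Quotient.mk_eq_zero]
    obtain ⟨r, hr⟩ := hq
    obtain ⟨s, rfl⟩ := Ideal.mem_span_singleton'.mp (mem_span_singleton_of_of_eq_smul I hr)
    have hx : a • x = a • of I R s := by rw [← hr, ← map_smul, smul_eq_mul, mul_comm]
    exact ⟨s, (ha.isSMulRegular hx).symm⟩

end AdicCompletion

section AssociatedPrimes

variable {R : Type*} [CommRing R] [IsNoetherianRing R]

theorem Module.IsTorsionFree.disjoint_nonZeroDivisors_of_mem_associatedPrimes {M : Type*}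
    [AddCommGroup M] [Module R M] [Module.IsTorsionFree R M] {p : Ideal R}
    (hp : p ∈ associatedPrimes R M) : Disjoint (p : Set R) R⁰ :=
  Set.disjoint_left.mpr fun a hap ha ↦ by
    have : a ∈ ⋃ p ∈ associatedPrimes R M, (p : Set R) := Set.mem_biUnion hp hap
    rw [biUnion_associatedPrimes_eq_compl_regular] at this
    exact this (isRegular_iff_mem_nonZeroDivisors.mpr ha).isSMulRegular

theorem Ideal.exists_mem_associatedPrimes_le_of_disjoint_nonZeroDivisors {I : Ideal R}
    (h : Disjoint (I : Set R) R⁰) : ∃ P ∈ associatedPrimes R R, I ≤ P :=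
  (I.subset_union_prime_finite (associatedPrimes.finite R R) (f := id) 0 0
    fun _ h _ _ ↦ h.1).1 <|
    biUnion_associatedPrimes_eq_compl_nonZeroDivisors R ▸ h.subset_compl_right

theorem Ideal.mem_associatedPrimes_of_disjoint_nonZeroDivisors
    (h : ∀ q ∈ associatedPrimes R R, q ∈ minimalPrimes R) {p : Ideal R} [p.IsPrime]
    (hp : Disjoint (p : Set R) R⁰) : p ∈ associatedPrimes R R := by
  obtain ⟨q, hq, hpq⟩ := exists_mem_associatedPrimes_le_of_disjoint_nonZeroDivisors hp
  have hq' : Minimal (fun I : Ideal R ↦ I.IsPrime ∧ ⊥ ≤ I) q := h q hq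
  rwa [hq'.eq_of_le ⟨‹_›, bot_le⟩ hpq]

end AssociatedPrimes

theorem Ideal.eq_bot_of_disjoint_nonZeroDivisors {R : Type*} [CommRing R] [NoZeroDivisors R]
    {I : Ideal R} (h : Disjoint (I : Set R) R⁰) : I = ⊥ :=
  eq_bot_iff.mpr fun x hx ↦ by
    by_contra hx0
    exact Set.disjoint_left.mp h hx (mem_nonZeroDivisors_of_ne_zero hx0)

/-- Lemma 2.1 (ii): let `(R,𝔪)` be a noetherian local ring all of whose associated primes are
minimal primes.  Then `Ass_R (R̂/R) ⊆ Ass R`, where `R̂` is the `𝔪`-adic completion of `R`.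
In particular, if `R` is a domain which is not complete (`R ⊊ R̂`), then
`Ass_R (R̂/R) = {(0)}`. -/
theorem associatedPrimes_completion_quotient_subset
    (R : Type) [CommRing R] [IsNoetherianRing R] [IsLocalRing R]
    (h : ∀ 𝔭 ∈ associatedPrimes R R, 𝔭 ∈ minimalPrimes R) :
    associatedPrimes R
        ((AdicCompletion (maximalIdeal R) R) ⧸
          LinearMap.range (AdicCompletion.of (maximalIdeal R) R))
      ⊆ associatedPrimes R R
    ∧ (IsDomain R → ¬ Function.Surjective (AdicCompletion.of (maximalIdeal R) R) →
        associatedPrimes R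
            ((AdicCompletion (maximalIdeal R) R) ⧸
              LinearMap.range (AdicCompletion.of (maximalIdeal R) R))
          = {⊥}) := by
  have :=
    AdicCompletion.isTorsionFree_quotient_range_of (maximalIdeal R) (maximalIdeal_le_jacobson ⊥)
  have hdisj : ∀ p ∈ associatedPrimes R (AdicCompletion (maximalIdeal R) R ⧸
      LinearMap.range (AdicCompletion.of (maximalIdeal R) R)), Disjoint (p : Set R) R⁰ :=
    fun p hp ↦
    Module.IsTorsionFree.disjoint_nonZeroDivisors_of_mem_associatedPrimes hp
  refine ⟨fun p hp ↦ ?_, fun _ hnsurj ↦ ?_⟩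
  · have := hp.isPrime
    exact Ideal.mem_associatedPrimes_of_disjoint_nonZeroDivisors h (hdisj p hp)
  · have : Nontrivial (AdicCompletion (maximalIdeal R) R ⧸
        LinearMap.range (AdicCompletion.of (maximalIdeal R) R)) :=
      Submodule.Quotient.nontrivial_iff.mpr (by rwa [Ne, LinearMap.range_eq_top])
    exact (associatedPrimes.nonempty R _).subset_singleton_iff.mp fun p hp ↦
      Ideal.eq_bot_of_disjoint_nonZeroDivisors (hdisj p hp)
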